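/- For any unit vector g ∈ Λ²H with H finite-dimensional, write g in the canonical basis as g = ∑ξ_i√2 φ_{2i-1}∧φ_{2i} (i = 1, ..., s); then ⟨g∧φ_j, g∧φ_j⟩ = (1/3)(1 - |ξ_k|²) if j ∈ {2k-1, 2k} for some k ≤ s, and ⟨g∧φ_j, g∧φ_j⟩ = 1/3 if j > 2s. -/

import Mathlib

noncomputable section
open scoped BigOperators ComplexConjugate InnerProductSpace

/-- The 1-particle space. -/
abbrev HS (n : ℕ) := EuclideanSpace ℂ (Fin n)
/-- Model for H^{⊗2}; Λ²H sits inside as the antisymmetric tensors. -/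
abbrev Sq (n : ℕ) := EuclideanSpace ℂ (Fin 2 → Fin n)
/-- Model for H^{⊗3}; Λ³H sits inside as the antisymmetric tensors. -/
abbrev Cube (n : ℕ) := EuclideanSpace ℂ (Fin 3 → Fin n)

/-- 2-particle wedge with convention ⟨u₁∧u₂, v₁∧v₂⟩ = (1/2!)det(⟨uᵢ,vⱼ⟩). -/
def wedge2 (n : ℕ) (u v : HS n) : Sq n :=
  WithLp.toLp 2 (fun x => (2 : ℂ)⁻¹ * (u (x 0) * v (x 1) - u (x 1) * v (x 0)))

/-- The 3-particle antisymmetrizer A³ on H^{⊗3}. -/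
def alt3 (n : ℕ) : Cube n →ₗ[ℂ] Cube n where
  toFun T := WithLp.toLp 2 (fun x => (6 : ℂ)⁻¹ *
    ∑ σ : Equiv.Perm (Fin 3), ((Equiv.Perm.sign σ : ℤ) : ℂ) * T (x ∘ σ))
  map_add' T S := by
    ext x
    simp [PiLp.add_apply, mul_add, Finset.sum_add_distrib]
  map_smul' c T := by
    ext x
    simp [PiLp.smul_apply, Finset.mul_sum, smul_eq_mul]
    ring_nf
    congr 1
    ext σ
    ring

/-- 3-particle wedge with convention ⟨u₁∧u₂∧u₃, v₁∧v₂∧v₃⟩ = (1/3!)det(⟨uᵢ,vⱼ⟩). -/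
def wedge3 (n : ℕ) (u v w : HS n) : Cube n :=
  WithLp.toLp 2 (fun x => (6 : ℂ)⁻¹ * ∑ σ : Equiv.Perm (Fin 3),
    ((Equiv.Perm.sign σ : ℤ) : ℂ) * (u (x (σ 0)) * v (x (σ 1)) * w (x (σ 2))))

/-- Wedge of a 2-particle function with a 1-particle function: g ∧ φ = A³(g ⊗ φ). -/
def wedgeSV (n : ℕ) (g : Sq n) (v : HS n) : Cube n :=
  alt3 n (WithLp.toLp 2 (fun x => g ![x 0, x 1] * v (x 2)))


/-- P²_g ⊗ I¹ acting on H^{⊗3}. -/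
def pgI (n : ℕ) (g : Sq n) : Cube n →ₗ[ℂ] Cube n where
  toFun T := WithLp.toLp 2 (fun x => g ![x 0, x 1] *
    ∑ y : Fin 2 → Fin n, conj (g y) * T ![y 0, y 1, x 2])
  map_add' T S := by
    ext x
    simp [PiLp.add_apply, mul_add, Finset.sum_add_distrib]
  map_smul' c T := by
    ext x
    simp [PiLp.smul_apply, Finset.mul_sum, smul_eq_mul]
    ring_nf
    congr 1
    ext y
    ring

/-- The operator 3P²_g ∧ I¹ = 3A³(P²_g ⊗ I¹)A³ (as an operator on H^{⊗3}; it
vanishes on the orthogonal complement of Λ³H and restricts to Λ³H). -/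
def T3 (n : ℕ) (g : Sq n) : Cube n →ₗ[ℂ] Cube n :=
  (3 : ℂ) • (alt3 n ∘ₗ pgI n g ∘ₗ alt3 n)


section AuxStmt17

lemma dsum (n : ℕ) (φ : Fin n → HS n) (hφ : Orthonormal ℂ φ) (i j : Fin n) :
    ∑ a, conj (φ i a) * φ j a = if i = j then 1 else 0 := by
  have := (orthonormal_iff_ite.mp hφ) i j
  simp [PiLp.inner_apply, RCLike.inner_apply] at this
  rw [← this]; exact Finset.sum_congr rfl fun _ _ => mul_comm _ _

lemma sum1_factor4 {α : Type*} [Fintype α] (c1 c2 c3 c4 : ℂ) (f1 f2 f3 f4 : α → ℂ)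
    (F : α → ℂ) (hF : ∀ b, F b = c1 * f1 b + c2 * f2 b + c3 * f3 b + c4 * f4 b) :
    ∑ b, F b = c1 * (∑ b, f1 b) + c2 * (∑ b, f2 b) + c3 * (∑ b, f3 b) + c4 * (∑ b, f4 b) := by
  simp [hF, Finset.sum_add_distrib, Finset.mul_sum]

lemma sum2_factor1 {α : Type*} [Fintype α] (c : ℂ) (f h : α → ℂ) :
    ∑ p, ∑ q, c * (f p * h q) = c * ((∑ p, f p) * (∑ q, h q)) := by
  rw [Finset.sum_mul_sum, Finset.mul_sum]
  exact Finset.sum_congr rfl fun p _ => by rw [Finset.mul_sum]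

lemma sum2_factor4 {α : Type*} [Fintype α] (c1 c2 c3 c4 : ℂ)
    (f1 h1 f2 h2 f3 h3 f4 h4 : α → ℂ) (F : α → α → ℂ)
    (hF : ∀ p q, F p q = c1 * (f1 p * h1 q) + c2 * (f2 p * h2 q)
      + c3 * (f3 p * h3 q) + c4 * (f4 p * h4 q)) :
    ∑ p, ∑ q, F p q = c1 * ((∑ p, f1 p) * (∑ q, h1 q)) + c2 * ((∑ p, f2 p) * (∑ q, h2 q))
      + c3 * ((∑ p, f3 p) * (∑ q, h3 q)) + c4 * ((∑ p, f4 p) * (∑ q, h4 q)) := by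
  simp only [hF, Finset.sum_add_distrib, sum2_factor1]

lemma sum_comm3 {α β : Type*} [Fintype α] [Fintype β] (F : α → β → β → ℂ) :
    ∑ b, ∑ i, ∑ p, F b i p = ∑ i, ∑ p, ∑ b, F b i p := by
  calc ∑ b, ∑ i, ∑ p, F b i p = ∑ i, ∑ b, ∑ p, F b i p := Finset.sum_comm
    _ = ∑ i, ∑ p, ∑ b, F b i p := Finset.sum_congr rfl fun i _ => Finset.sum_comm

lemma sum_comm3' {α β : Type*} [Fintype α] [Fintype β] (F : α → α → β → ℂ) :
    ∑ p, ∑ q, ∑ i, F p q i = ∑ i, ∑ p, ∑ q, F p q i := by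
  calc ∑ p, ∑ q, ∑ i, F p q i
      = ∑ p, ∑ i, ∑ q, F p q i := Finset.sum_congr rfl fun p _ => Finset.sum_comm
    _ = ∑ i, ∑ p, ∑ q, F p q i := Finset.sum_comm

lemma sum_comm4 {α β : Type*} [Fintype α] [Fintype β] (F : α → α → β → β → ℂ) :
    ∑ a, ∑ b, ∑ i, ∑ p, F a b i p = ∑ i, ∑ p, ∑ a, ∑ b, F a b i p := by
  calc ∑ a, ∑ b, ∑ i, ∑ p, F a b i p
      = ∑ a, ∑ i, ∑ b, ∑ p, F a b i p :=
        Finset.sum_congr rfl fun a _ => Finset.sum_comm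
    _ = ∑ i, ∑ a, ∑ b, ∑ p, F a b i p := Finset.sum_comm
    _ = ∑ i, ∑ a, ∑ p, ∑ b, F a b i p := Finset.sum_congr rfl fun i _ =>
        Finset.sum_congr rfl fun a _ => Finset.sum_comm
    _ = ∑ i, ∑ p, ∑ a, ∑ b, F a b i p := Finset.sum_congr rfl fun i _ =>
        Finset.sum_comm

lemma core (n s : ℕ) (φ : Fin n → HS n) (hφ : Orthonormal ℂ φ)
    (ef ff : Fin s → Fin n) (he : Function.Injective ef) (hf : Function.Injective ff)
    (hef : ∀ i j, ef i ≠ ff j) (κ : Fin s → ℂ) (j : Fin n) (G : Fin n → Fin n → ℂ)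
    (hG : ∀ a b, G a b = ∑ i, κ i * (φ (ef i) a * φ (ff i) b - φ (ef i) b * φ (ff i) a)) :
    ∑ a, ∑ b, ∑ c,
      conj (3⁻¹ * (G a b * φ j c + G b c * φ j a + G c a * φ j b))
        * (3⁻¹ * (G a b * φ j c + G b c * φ j a + G c a * φ j b))
    = 3⁻¹ * ∑ i, conj (κ i) * κ i *
        (2 - 2 * ((if ef i = j then 1 else 0) + (if ff i = j then 1 else 0))) := by
  have dUU : ∀ i p : Fin s, ∑ b, conj (φ (ef i) b) * φ (ef p) b = if i = p then 1 else 0 := by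
    intro i p; rw [dsum n φ hφ]; simp [he.eq_iff]
  have dVV : ∀ i p : Fin s, ∑ b, conj (φ (ff i) b) * φ (ff p) b = if i = p then 1 else 0 := by
    intro i p; rw [dsum n φ hφ]; simp [hf.eq_iff]
  have dUV : ∀ i p : Fin s, ∑ b, conj (φ (ef i) b) * φ (ff p) b = 0 := by
    intro i p; rw [dsum n φ hφ]; simp [hef i p]
  have dVU : ∀ i p : Fin s, ∑ b, conj (φ (ff i) b) * φ (ef p) b = 0 := by
    intro i p; rw [dsum n φ hφ]; exact if_neg fun h => hef p i h.symm
  have d'UU : ∀ i p : Fin s, ∑ b, φ (ef i) b * conj (φ (ef p) b) = if i = p then 1 else 0 := by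
    intro i p
    rw [show ∑ b, φ (ef i) b * conj (φ (ef p) b) = ∑ b, conj (φ (ef p) b) * φ (ef i) b from
      Finset.sum_congr rfl fun b _ => mul_comm _ _, dsum n φ hφ]
    simp [he.eq_iff, eq_comm]
  have d'VV : ∀ i p : Fin s, ∑ b, φ (ff i) b * conj (φ (ff p) b) = if i = p then 1 else 0 := by
    intro i p
    rw [show ∑ b, φ (ff i) b * conj (φ (ff p) b) = ∑ b, conj (φ (ff p) b) * φ (ff i) b from
      Finset.sum_congr rfl fun b _ => mul_comm _ _, dsum n φ hφ]
    simp [hf.eq_iff, eq_comm]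
  have d'VU : ∀ i p : Fin s, ∑ b, φ (ff i) b * conj (φ (ef p) b) = 0 := by
    intro i p
    rw [show ∑ b, φ (ff i) b * conj (φ (ef p) b) = ∑ b, conj (φ (ef p) b) * φ (ff i) b from
      Finset.sum_congr rfl fun b _ => mul_comm _ _, dsum n φ hφ]
    simp [hef p i]
  have d'UV : ∀ i p : Fin s, ∑ b, φ (ef i) b * conj (φ (ff p) b) = 0 := by
    intro i p
    rw [show ∑ b, φ (ef i) b * conj (φ (ff p) b) = ∑ b, conj (φ (ff p) b) * φ (ef i) b from
      Finset.sum_congr rfl fun b _ => mul_comm _ _, dsum n φ hφ]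
    exact if_neg fun h => hef i p h.symm
  have dvv : ∑ a, conj (φ j a) * φ j a = 1 := by simpa using dsum n φ hφ j j
  have dUv : ∀ i : Fin s, ∑ a, conj (φ j a) * φ (ef i) a = if ef i = j then 1 else 0 := by
    intro i; rw [dsum n φ hφ]; simp [eq_comm]
  have dVv : ∀ i : Fin s, ∑ a, conj (φ j a) * φ (ff i) a = if ff i = j then 1 else 0 := by
    intro i; rw [dsum n φ hφ]; simp [eq_comm]
  have dvU : ∀ i : Fin s, ∑ a, φ j a * conj (φ (ef i) a) = if ef i = j then 1 else 0 := by
    intro i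
    rw [show ∑ a, φ j a * conj (φ (ef i) a) = ∑ a, conj (φ (ef i) a) * φ j a from
      Finset.sum_congr rfl fun a _ => mul_comm _ _, dsum n φ hφ]
  have dvV : ∀ i : Fin s, ∑ a, φ j a * conj (φ (ff i) a) = if ff i = j then 1 else 0 := by
    intro i
    rw [show ∑ a, φ j a * conj (φ (ff i) a) = ∑ a, conj (φ (ff i) a) * φ j a from
      Finset.sum_congr rfl fun a _ => mul_comm _ _, dsum n φ hφ]
  have hGanti : ∀ x y : Fin n, G x y = -G y x := by
    intro x y
    rw [hG, hG, ← Finset.sum_neg_distrib]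
    exact Finset.sum_congr rfl fun i _ => by ring
  set A : ℂ := ∑ i, conj (κ i) * κ i * 2 with hA
  set B : ℂ := ∑ i, conj (κ i) * κ i *
      ((if ef i = j then 1 else 0) + (if ff i = j then 1 else 0)) with hB
  -- the norm of G
  have hN : ∑ a, ∑ b, conj (G a b) * G a b = A := by
    calc ∑ a, ∑ b, conj (G a b) * G a b
        = ∑ a, ∑ b, ∑ i, ∑ p,
            (conj (κ i) * (conj (φ (ef i) a) * conj (φ (ff i) b)
              - conj (φ (ef i) b) * conj (φ (ff i) a)))
            * (κ p * (φ (ef p) a * φ (ff p) b - φ (ef p) b * φ (ff p) a)) := by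
          refine Finset.sum_congr rfl fun a _ => Finset.sum_congr rfl fun b _ => ?_
          rw [hG a b]
          simp only [map_sum, map_mul, map_sub]
          rw [Finset.sum_mul_sum]
      _ = ∑ i, ∑ p, ∑ a, ∑ b,
            (conj (κ i) * (conj (φ (ef i) a) * conj (φ (ff i) b)
              - conj (φ (ef i) b) * conj (φ (ff i) a)))
            * (κ p * (φ (ef p) a * φ (ff p) b - φ (ef p) b * φ (ff p) a)) := sum_comm4 _
      _ = A := by
          rw [hA]
          refine Finset.sum_congr rfl fun i _ => ?_
          have fact : ∀ p : Fin s, ∑ a, ∑ b,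
              (conj (κ i) * (conj (φ (ef i) a) * conj (φ (ff i) b)
                - conj (φ (ef i) b) * conj (φ (ff i) a)))
              * (κ p * (φ (ef p) a * φ (ff p) b - φ (ef p) b * φ (ff p) a))
              = (conj (κ i) * κ p) * ((∑ a, conj (φ (ef i) a) * φ (ef p) a)
                  * (∑ b, conj (φ (ff i) b) * φ (ff p) b))
                + (-(conj (κ i) * κ p)) * ((∑ a, conj (φ (ef i) a) * φ (ff p) a)
                  * (∑ b, conj (φ (ff i) b) * φ (ef p) b))
                + (-(conj (κ i) * κ p)) * ((∑ a, conj (φ (ff i) a) * φ (ef p) a)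
                  * (∑ b, conj (φ (ef i) b) * φ (ff p) b))
                + (conj (κ i) * κ p) * ((∑ a, conj (φ (ff i) a) * φ (ff p) a)
                  * (∑ b, conj (φ (ef i) b) * φ (ef p) b)) := by
            intro p
            exact sum2_factor4 _ _ _ _ _ _ _ _ _ _ _ _ _ (fun a b => by ring)
          rw [Finset.sum_congr rfl fun p _ => fact p]
          simp only [dUU, dVV, dUV, dVU]
          simp [Finset.sum_ite_eq, mul_ite, ite_mul, mul_zero, zero_mul,
            Finset.sum_add_distrib]
          ring
  
  -- contraction kernels
  have hK : ∀ a c : Fin n, ∑ b, conj (G a b) * G b c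
      = -∑ i, conj (κ i) * κ i *
          (conj (φ (ef i) a) * φ (ef i) c + conj (φ (ff i) a) * φ (ff i) c) := by
    intro a c
    calc ∑ b, conj (G a b) * G b c
        = ∑ b, ∑ i, ∑ p,
            (conj (κ i) * (conj (φ (ef i) a) * conj (φ (ff i) b)
              - conj (φ (ef i) b) * conj (φ (ff i) a)))
            * (κ p * (φ (ef p) b * φ (ff p) c - φ (ef p) c * φ (ff p) b)) := by
          refine Finset.sum_congr rfl fun b _ => ?_
          rw [hG a b, hG b c]
          simp only [map_sum, map_mul, map_sub]
          rw [Finset.sum_mul_sum]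
      _ = ∑ i, ∑ p, ∑ b,
            (conj (κ i) * (conj (φ (ef i) a) * conj (φ (ff i) b)
              - conj (φ (ef i) b) * conj (φ (ff i) a)))
            * (κ p * (φ (ef p) b * φ (ff p) c - φ (ef p) c * φ (ff p) b)) := sum_comm3 _
      _ = ∑ i, ∑ p,
            ((conj (κ i) * κ p * (conj (φ (ef i) a) * φ (ff p) c))
                * (∑ b, conj (φ (ff i) b) * φ (ef p) b)
              + (-(conj (κ i) * κ p * (conj (φ (ef i) a) * φ (ef p) c)))
                * (∑ b, conj (φ (ff i) b) * φ (ff p) b)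
              + (-(conj (κ i) * κ p * (conj (φ (ff i) a) * φ (ff p) c)))
                * (∑ b, conj (φ (ef i) b) * φ (ef p) b)
              + (conj (κ i) * κ p * (conj (φ (ff i) a) * φ (ef p) c))
                * (∑ b, conj (φ (ef i) b) * φ (ff p) b)) :=
          Finset.sum_congr rfl fun i _ => Finset.sum_congr rfl fun p _ =>
            sum1_factor4 _ _ _ _ _ _ _ _ _ (fun b => by ring)
      _ = -∑ i, conj (κ i) * κ i *
            (conj (φ (ef i) a) * φ (ef i) c + conj (φ (ff i) a) * φ (ff i) c) := by
          simp only [dVU, dVV, dUU, dUV]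
          rw [← Finset.sum_neg_distrib]
          refine Finset.sum_congr rfl fun i _ => ?_
          simp [Finset.sum_ite_eq, mul_ite, ite_mul, mul_zero, zero_mul, mul_one,
            Finset.sum_add_distrib]
          ring
  have hK' : ∀ a c : Fin n, ∑ b, G a b * conj (G b c)
      = -∑ i, conj (κ i) * κ i *
          (φ (ef i) a * conj (φ (ef i) c) + φ (ff i) a * conj (φ (ff i) c)) := by
    intro a c
    calc ∑ b, G a b * conj (G b c)
        = ∑ b, ∑ i, ∑ p,
            (κ i * (φ (ef i) a * φ (ff i) b - φ (ef i) b * φ (ff i) a))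
            * (conj (κ p) * (conj (φ (ef p) b) * conj (φ (ff p) c)
              - conj (φ (ef p) c) * conj (φ (ff p) b))) := by
          refine Finset.sum_congr rfl fun b _ => ?_
          rw [hG a b, hG b c]
          simp only [map_sum, map_mul, map_sub]
          rw [Finset.sum_mul_sum]
      _ = ∑ i, ∑ p, ∑ b,
            (κ i * (φ (ef i) a * φ (ff i) b - φ (ef i) b * φ (ff i) a))
            * (conj (κ p) * (conj (φ (ef p) b) * conj (φ (ff p) c)
              - conj (φ (ef p) c) * conj (φ (ff p) b))) := sum_comm3 _
      _ = ∑ i, ∑ p,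
            ((κ i * conj (κ p) * (φ (ef i) a * conj (φ (ff p) c)))
                * (∑ b, φ (ff i) b * conj (φ (ef p) b))
              + (-(κ i * conj (κ p) * (φ (ef i) a * conj (φ (ef p) c))))
                * (∑ b, φ (ff i) b * conj (φ (ff p) b))
              + (-(κ i * conj (κ p) * (φ (ff i) a * conj (φ (ff p) c))))
                * (∑ b, φ (ef i) b * conj (φ (ef p) b))
              + (κ i * conj (κ p) * (φ (ff i) a * conj (φ (ef p) c)))
                * (∑ b, φ (ef i) b * conj (φ (ff p) b))) :=
          Finset.sum_congr rfl fun i _ => Finset.sum_congr rfl fun p _ =>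
            sum1_factor4 _ _ _ _ _ _ _ _ _ (fun b => by ring)
      _ = -∑ i, conj (κ i) * κ i *
            (φ (ef i) a * conj (φ (ef i) c) + φ (ff i) a * conj (φ (ff i) c)) := by
          simp only [d'VU, d'VV, d'UU, d'UV]
          rw [← Finset.sum_neg_distrib]
          refine Finset.sum_congr rfl fun i _ => ?_
          simp [Finset.sum_ite_eq, mul_ite, ite_mul, mul_zero, zero_mul, mul_one,
            Finset.sum_add_distrib]
          ring
  -- the two S-shaped sums
  have hS1 : ∑ p, ∑ q, (φ j p * conj (φ j q)) * (∑ m, conj (G p m) * G m q) = -B := by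
    calc ∑ p, ∑ q, (φ j p * conj (φ j q)) * (∑ m, conj (G p m) * G m q)
        = ∑ p, ∑ q, ∑ i, -((φ j p * conj (φ j q)) * (conj (κ i) * κ i *
            (conj (φ (ef i) p) * φ (ef i) q + conj (φ (ff i) p) * φ (ff i) q))) := by
          refine Finset.sum_congr rfl fun p _ => Finset.sum_congr rfl fun q _ => ?_
          rw [hK p q, mul_neg, Finset.mul_sum, ← Finset.sum_neg_distrib]
      _ = ∑ i, ∑ p, ∑ q, -((φ j p * conj (φ j q)) * (conj (κ i) * κ i *
            (conj (φ (ef i) p) * φ (ef i) q + conj (φ (ff i) p) * φ (ff i) q))) :=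
          sum_comm3' _
      _ = ∑ i, ((-(conj (κ i) * κ i))
              * ((∑ p, φ j p * conj (φ (ef i) p)) * (∑ q, conj (φ j q) * φ (ef i) q))
            + (-(conj (κ i) * κ i))
              * ((∑ p, φ j p * conj (φ (ff i) p)) * (∑ q, conj (φ j q) * φ (ff i) q))
            + (0:ℂ) * ((∑ _p : Fin n, (0:ℂ)) * (∑ _q : Fin n, (0:ℂ)))
            + (0:ℂ) * ((∑ _p : Fin n, (0:ℂ)) * (∑ _q : Fin n, (0:ℂ)))) :=
          Finset.sum_congr rfl fun i _ =>
            sum2_factor4 _ _ _ _ _ _ _ _ _ _ _ _ _ (fun p q => by ring)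
      _ = -B := by
          simp only [dvU, dUv, dvV, dVv, hB]
          rw [← Finset.sum_neg_distrib]
          refine Finset.sum_congr rfl fun i _ => ?_
          by_cases h1 : ef i = j <;> by_cases h2 : ff i = j <;> simp [h1, h2] <;> ring
  have hS2 : ∑ p, ∑ q, (conj (φ j p) * φ j q) * (∑ m, G p m * conj (G m q)) = -B := by
    calc ∑ p, ∑ q, (conj (φ j p) * φ j q) * (∑ m, G p m * conj (G m q))
        = ∑ p, ∑ q, ∑ i, -((conj (φ j p) * φ j q) * (conj (κ i) * κ i *
            (φ (ef i) p * conj (φ (ef i) q) + φ (ff i) p * conj (φ (ff i) q)))) := by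
          refine Finset.sum_congr rfl fun p _ => Finset.sum_congr rfl fun q _ => ?_
          rw [hK' p q, mul_neg, Finset.mul_sum, ← Finset.sum_neg_distrib]
      _ = ∑ i, ∑ p, ∑ q, -((conj (φ j p) * φ j q) * (conj (κ i) * κ i *
            (φ (ef i) p * conj (φ (ef i) q) + φ (ff i) p * conj (φ (ff i) q)))) :=
          sum_comm3' _
      _ = ∑ i, ((-(conj (κ i) * κ i))
              * ((∑ p, conj (φ j p) * φ (ef i) p) * (∑ q, φ j q * conj (φ (ef i) q)))
            + (-(conj (κ i) * κ i))
              * ((∑ p, conj (φ j p) * φ (ff i) p) * (∑ q, φ j q * conj (φ (ff i) q)))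
            + (0:ℂ) * ((∑ _p : Fin n, (0:ℂ)) * (∑ _q : Fin n, (0:ℂ)))
            + (0:ℂ) * ((∑ _p : Fin n, (0:ℂ)) * (∑ _q : Fin n, (0:ℂ)))) :=
          Finset.sum_congr rfl fun i _ =>
            sum2_factor4 _ _ _ _ _ _ _ _ _ _ _ _ _ (fun p q => by ring)
      _ = -B := by
          simp only [dvU, dUv, dvV, dVv, hB]
          rw [← Finset.sum_neg_distrib]
          refine Finset.sum_congr rfl fun i _ => ?_
          by_cases h1 : ef i = j <;> by_cases h2 : ff i = j <;> simp [h1, h2] <;> ring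
  -- nine terms
  have T1 : ∑ a, ∑ b, ∑ c, (conj (G a b) * conj (φ j c)) * (G a b * φ j c) = A := by
    calc ∑ a, ∑ b, ∑ c, (conj (G a b) * conj (φ j c)) * (G a b * φ j c)
        = ∑ a, ∑ b, conj (G a b) * G a b := by
          refine Finset.sum_congr rfl fun a _ => Finset.sum_congr rfl fun b _ => ?_
          rw [show ∑ c, (conj (G a b) * conj (φ j c)) * (G a b * φ j c)
              = (conj (G a b) * G a b) * ∑ c, conj (φ j c) * φ j c from by
            rw [Finset.mul_sum]; exact Finset.sum_congr rfl fun c _ => by ring]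
          rw [dvv, mul_one]
      _ = A := hN
  have T5 : ∑ a, ∑ b, ∑ c, (conj (G b c) * conj (φ j a)) * (G b c * φ j a) = A := by
    calc ∑ a, ∑ b, ∑ c, (conj (G b c) * conj (φ j a)) * (G b c * φ j a)
        = ∑ a, (conj (φ j a) * φ j a) * (∑ b, ∑ c, conj (G b c) * G b c) := by
          refine Finset.sum_congr rfl fun a _ => ?_
          rw [Finset.mul_sum]
          refine Finset.sum_congr rfl fun b _ => ?_
          rw [Finset.mul_sum]
          exact Finset.sum_congr rfl fun c _ => by ring
      _ = A := by rw [hN, ← Finset.sum_mul, dvv, one_mul]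
  have T9 : ∑ a, ∑ b, ∑ c, (conj (G c a) * conj (φ j b)) * (G c a * φ j b) = A := by
    calc ∑ a, ∑ b, ∑ c, (conj (G c a) * conj (φ j b)) * (G c a * φ j b)
        = ∑ a, ∑ c, ∑ b, (conj (G c a) * conj (φ j b)) * (G c a * φ j b) :=
          Finset.sum_congr rfl fun a _ => Finset.sum_comm
      _ = ∑ a, ∑ c, conj (G c a) * G c a := by
          refine Finset.sum_congr rfl fun a _ => Finset.sum_congr rfl fun c _ => ?_
          rw [show ∑ b, (conj (G c a) * conj (φ j b)) * (G c a * φ j b)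
              = (conj (G c a) * G c a) * ∑ b, conj (φ j b) * φ j b from by
            rw [Finset.mul_sum]; exact Finset.sum_congr rfl fun b _ => by ring]
          rw [dvv, mul_one]
      _ = ∑ c, ∑ a, conj (G c a) * G c a := Finset.sum_comm
      _ = A := hN
  have T2 : ∑ a, ∑ b, ∑ c, (conj (G a b) * conj (φ j c)) * (G b c * φ j a) = -B := by
    calc ∑ a, ∑ b, ∑ c, (conj (G a b) * conj (φ j c)) * (G b c * φ j a)
        = ∑ a, ∑ c, ∑ b, (conj (G a b) * conj (φ j c)) * (G b c * φ j a) :=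
          Finset.sum_congr rfl fun a _ => Finset.sum_comm
      _ = ∑ a, ∑ c, (φ j a * conj (φ j c)) * (∑ b, conj (G a b) * G b c) := by
          refine Finset.sum_congr rfl fun a _ => Finset.sum_congr rfl fun c _ => ?_
          rw [Finset.mul_sum]
          exact Finset.sum_congr rfl fun b _ => by ring
      _ = -B := hS1
  have T3 : ∑ a, ∑ b, ∑ c, (conj (G a b) * conj (φ j c)) * (G c a * φ j b) = -B := by
    calc ∑ a, ∑ b, ∑ c, (conj (G a b) * conj (φ j c)) * (G c a * φ j b)
        = ∑ b, ∑ a, ∑ c, (conj (G a b) * conj (φ j c)) * (G c a * φ j b) :=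
          Finset.sum_comm
      _ = ∑ b, ∑ c, ∑ a, (conj (G a b) * conj (φ j c)) * (G c a * φ j b) :=
          Finset.sum_congr rfl fun b _ => Finset.sum_comm
      _ = ∑ b, ∑ c, (φ j b * conj (φ j c)) * (∑ a, conj (G b a) * G a c) := by
          refine Finset.sum_congr rfl fun b _ => Finset.sum_congr rfl fun c _ => ?_
          rw [Finset.mul_sum]
          refine Finset.sum_congr rfl fun a _ => ?_
          rw [hGanti a b, hGanti c a, map_neg]
          ring
      _ = -B := hS1
  have T6 : ∑ a, ∑ b, ∑ c, (conj (G b c) * conj (φ j a)) * (G c a * φ j b) = -B := by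
    calc ∑ a, ∑ b, ∑ c, (conj (G b c) * conj (φ j a)) * (G c a * φ j b)
        = ∑ a, ∑ b, (φ j b * conj (φ j a)) * (∑ c, conj (G b c) * G c a) := by
          refine Finset.sum_congr rfl fun a _ => Finset.sum_congr rfl fun b _ => ?_
          rw [Finset.mul_sum]
          exact Finset.sum_congr rfl fun c _ => by ring
      _ = ∑ b, ∑ a, (φ j b * conj (φ j a)) * (∑ c, conj (G b c) * G c a) :=
          Finset.sum_comm
      _ = -B := hS1
  have T4 : ∑ a, ∑ b, ∑ c, (conj (G b c) * conj (φ j a)) * (G a b * φ j c) = -B := by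
    calc ∑ a, ∑ b, ∑ c, (conj (G b c) * conj (φ j a)) * (G a b * φ j c)
        = ∑ a, ∑ c, ∑ b, (conj (G b c) * conj (φ j a)) * (G a b * φ j c) :=
          Finset.sum_congr rfl fun a _ => Finset.sum_comm
      _ = ∑ a, ∑ c, (conj (φ j a) * φ j c) * (∑ b, G a b * conj (G b c)) := by
          refine Finset.sum_congr rfl fun a _ => Finset.sum_congr rfl fun c _ => ?_
          rw [Finset.mul_sum]
          exact Finset.sum_congr rfl fun b _ => by ring
      _ = -B := hS2
  have T7 : ∑ a, ∑ b, ∑ c, (conj (G c a) * conj (φ j b)) * (G a b * φ j c) = -B := by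
    calc ∑ a, ∑ b, ∑ c, (conj (G c a) * conj (φ j b)) * (G a b * φ j c)
        = ∑ b, ∑ a, ∑ c, (conj (G c a) * conj (φ j b)) * (G a b * φ j c) :=
          Finset.sum_comm
      _ = ∑ b, ∑ c, ∑ a, (conj (G c a) * conj (φ j b)) * (G a b * φ j c) :=
          Finset.sum_congr rfl fun b _ => Finset.sum_comm
      _ = ∑ b, ∑ c, (conj (φ j b) * φ j c) * (∑ a, G b a * conj (G a c)) := by
          refine Finset.sum_congr rfl fun b _ => Finset.sum_congr rfl fun c _ => ?_
          rw [Finset.mul_sum]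
          refine Finset.sum_congr rfl fun a _ => ?_
          rw [hGanti c a, hGanti a b, map_neg]
          ring
      _ = -B := hS2
  have T8 : ∑ a, ∑ b, ∑ c, (conj (G c a) * conj (φ j b)) * (G b c * φ j a) = -B := by
    calc ∑ a, ∑ b, ∑ c, (conj (G c a) * conj (φ j b)) * (G b c * φ j a)
        = ∑ a, ∑ b, (φ j a * conj (φ j b)) * (∑ c, conj (G a c) * G c b) := by
          refine Finset.sum_congr rfl fun a _ => Finset.sum_congr rfl fun b _ => ?_
          rw [Finset.mul_sum]
          refine Finset.sum_congr rfl fun c _ => ?_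
          rw [hGanti c a, hGanti b c, map_neg]
          ring
      _ = -B := hS1
  -- assembly
  have c3inv : conj ((3:ℂ)⁻¹) = (3:ℂ)⁻¹ := by
    rw [map_inv₀, Complex.conj_ofNat]
  have expand : ∀ a b c : Fin n,
      conj (3⁻¹ * (G a b * φ j c + G b c * φ j a + G c a * φ j b))
        * (3⁻¹ * (G a b * φ j c + G b c * φ j a + G c a * φ j b))
      = (9:ℂ)⁻¹ * ((conj (G a b) * conj (φ j c)) * (G a b * φ j c)
        + (conj (G a b) * conj (φ j c)) * (G b c * φ j a)
        + (conj (G a b) * conj (φ j c)) * (G c a * φ j b)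
        + (conj (G b c) * conj (φ j a)) * (G a b * φ j c)
        + (conj (G b c) * conj (φ j a)) * (G b c * φ j a)
        + (conj (G b c) * conj (φ j a)) * (G c a * φ j b)
        + (conj (G c a) * conj (φ j b)) * (G a b * φ j c)
        + (conj (G c a) * conj (φ j b)) * (G b c * φ j a)
        + (conj (G c a) * conj (φ j b)) * (G c a * φ j b)) := by
    intro a b c
    simp only [map_mul, map_add, c3inv]
    have h9 : (9:ℂ)⁻¹ = 3⁻¹ * 3⁻¹ := by norm_num
    rw [h9]
    ring
  have hRHS : ∑ i, conj (κ i) * κ i *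
      (2 - 2 * ((if ef i = j then 1 else 0) + (if ff i = j then 1 else 0)))
      = A - 2 * B := by
    rw [hA, hB, Finset.mul_sum, ← Finset.sum_sub_distrib]
    exact Finset.sum_congr rfl fun i _ => by ring
  calc ∑ a, ∑ b, ∑ c,
      conj (3⁻¹ * (G a b * φ j c + G b c * φ j a + G c a * φ j b))
        * (3⁻¹ * (G a b * φ j c + G b c * φ j a + G c a * φ j b))
      = ∑ a, ∑ b, ∑ c, (9:ℂ)⁻¹ * ((conj (G a b) * conj (φ j c)) * (G a b * φ j c)
        + (conj (G a b) * conj (φ j c)) * (G b c * φ j a)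
        + (conj (G a b) * conj (φ j c)) * (G c a * φ j b)
        + (conj (G b c) * conj (φ j a)) * (G a b * φ j c)
        + (conj (G b c) * conj (φ j a)) * (G b c * φ j a)
        + (conj (G b c) * conj (φ j a)) * (G c a * φ j b)
        + (conj (G c a) * conj (φ j b)) * (G a b * φ j c)
        + (conj (G c a) * conj (φ j b)) * (G b c * φ j a)
        + (conj (G c a) * conj (φ j b)) * (G c a * φ j b)) := by
        exact Finset.sum_congr rfl fun a _ => Finset.sum_congr rfl fun b _ =>
          Finset.sum_congr rfl fun c _ => expand a b c
    _ = 3⁻¹ * ∑ i, conj (κ i) * κ i *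
        (2 - 2 * ((if ef i = j then 1 else 0) + (if ff i = j then 1 else 0))) := by
        simp only [← Finset.mul_sum, Finset.sum_add_distrib]
        rw [T1, T2, T3, T4, T5, T6, T7, T8, T9, hRHS]
        exact (by intro X Y; ring :
          ∀ X Y : ℂ, (9:ℂ)⁻¹ * (X + -Y + -Y + -Y + X + -Y + -Y + -Y + X)
            = 3⁻¹ * (X - 2*Y)) A B

def e3 (n : ℕ) : (Fin n × Fin n × Fin n) ≃ (Fin 3 → Fin n) where
  toFun p := ![p.1, p.2.1, p.2.2]
  invFun x := (x 0, x 1, x 2)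
  left_inv p := rfl
  right_inv x := by funext i; fin_cases i <;> rfl

lemma sum3 (n : ℕ) (f : (Fin 3 → Fin n) → ℂ) :
    ∑ x : Fin 3 → Fin n, f x = ∑ a, ∑ b, ∑ c, f ![a, b, c] := by
  rw [← Equiv.sum_comp (e3 n) f, Fintype.sum_prod_type]
  simp only [Fintype.sum_prod_type, e3, Equiv.coe_fn_mk]
  rfl

end AuxStmt17

section AuxStmt17b

lemma wedgeSV_eq (n : ℕ) (g : Sq n) (hg : ∀ a b : Fin n, g ![b, a] = - g ![a, b])
    (v : HS n) (x : Fin 3 → Fin n) :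
    wedgeSV n g v x = (3:ℂ)⁻¹ * (g ![x 0, x 1] * v (x 2) + g ![x 1, x 2] * v (x 0)
      + g ![x 2, x 0] * v (x 1)) := by
  show (6 : ℂ)⁻¹ * ∑ σ : Equiv.Perm (Fin 3),
      ((Equiv.Perm.sign σ : ℤ) : ℂ) * (g ![(x ∘ σ) 0, (x ∘ σ) 1] * v ((x ∘ σ) 2)) = _
  rw [show (Finset.univ : Finset (Equiv.Perm (Fin 3))) =
    {1, Equiv.swap 0 1, Equiv.swap 0 2, Equiv.swap 1 2,
     Equiv.swap 0 1 * Equiv.swap 1 2, Equiv.swap 1 2 * Equiv.swap 0 1} from by decide]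
  rw [Finset.sum_insert (by decide), Finset.sum_insert (by decide),
      Finset.sum_insert (by decide), Finset.sum_insert (by decide),
      Finset.sum_insert (by decide), Finset.sum_singleton]
  simp [Equiv.swap_apply_def, Equiv.Perm.coe_mul]
  rw [hg (x 0) (x 1), hg (x 1) (x 2), hg (x 0) (x 2)]
  push_cast
  ring

lemma master (n s : ℕ) (φ : Fin n → HS n) (hφ : Orthonormal ℂ φ)
    (ef ff : Fin s → Fin n) (he : Function.Injective ef) (hf : Function.Injective ff)
    (hef : ∀ i j, ef i ≠ ff j) (κ : Fin s → ℂ) (g : Sq n)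
    (hgdef : ∀ a b : Fin n, g ![a, b]
      = ∑ i, κ i * (φ (ef i) a * φ (ff i) b - φ (ef i) b * φ (ff i) a))
    (j : Fin n) :
    ⟪wedgeSV n g (φ j), wedgeSV n g (φ j)⟫_ℂ
      = 3⁻¹ * ∑ i, conj (κ i) * κ i *
          (2 - 2 * ((if ef i = j then 1 else 0) + (if ff i = j then 1 else 0))) := by
  have hganti : ∀ a b : Fin n, g ![b, a] = -g ![a, b] := by
    intro a b
    rw [hgdef, hgdef, ← Finset.sum_neg_distrib]
    exact Finset.sum_congr rfl fun i _ => by ring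
  calc ⟪wedgeSV n g (φ j), wedgeSV n g (φ j)⟫_ℂ
      = ∑ x : Fin 3 → Fin n, conj (wedgeSV n g (φ j) x) * wedgeSV n g (φ j) x := by
        rw [PiLp.inner_apply]
        exact Finset.sum_congr rfl fun _ _ => by rw [RCLike.inner_apply, mul_comm]
    _ = ∑ a, ∑ b, ∑ c, conj (wedgeSV n g (φ j) ![a, b, c])
          * wedgeSV n g (φ j) ![a, b, c] := sum3 n _
    _ = ∑ a, ∑ b, ∑ c,
          conj (3⁻¹ * (g ![a, b] * φ j c + g ![b, c] * φ j a + g ![c, a] * φ j b))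
            * (3⁻¹ * (g ![a, b] * φ j c + g ![b, c] * φ j a + g ![c, a] * φ j b)) := by
        refine Finset.sum_congr rfl fun a _ => Finset.sum_congr rfl fun b _ =>
          Finset.sum_congr rfl fun c _ => ?_
        rw [wedgeSV_eq n g hganti (φ j) ![a, b, c]]
        rfl
    _ = 3⁻¹ * ∑ i, conj (κ i) * κ i *
          (2 - 2 * ((if ef i = j then 1 else 0) + (if ff i = j then 1 else 0))) :=
        core n s φ hφ ef ff he hf hef κ j (fun a b => g ![a, b]) hgdef

end AuxStmt17b

/-- ⟨g∧φ_j, g∧φ_j⟩ = (1/3)(1-|ξ_k|²) if j ∈ {2k-1,2k}, and = 1/3 if j > 2s. -/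
theorem stmt17 (n s : ℕ) (hsn : 2 * s ≤ n) (φ : Fin n → HS n)
    (hφ : Orthonormal ℂ φ) (ξ : Fin s → ℂ) (hξ : ∑ i, ‖ξ i‖ ^ 2 = 1) :
    let g : Sq n := ∑ i : Fin s, ξ i • ((Real.sqrt 2 : ℂ) •
      wedge2 n (φ ⟨2 * (i : ℕ), by have := i.isLt; omega⟩)
        (φ ⟨2 * (i : ℕ) + 1, by have := i.isLt; omega⟩));
    (∀ k : Fin s,
      ⟪wedgeSV n g (φ ⟨2 * (k : ℕ), by have := k.isLt; omega⟩),
        wedgeSV n g (φ ⟨2 * (k : ℕ), by have := k.isLt; omega⟩)⟫_ℂ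
        = (((1 - ‖ξ k‖ ^ 2) / 3 : ℝ) : ℂ) ∧
      ⟪wedgeSV n g (φ ⟨2 * (k : ℕ) + 1, by have := k.isLt; omega⟩),
        wedgeSV n g (φ ⟨2 * (k : ℕ) + 1, by have := k.isLt; omega⟩)⟫_ℂ
        = (((1 - ‖ξ k‖ ^ 2) / 3 : ℝ) : ℂ)) ∧
    (∀ l : Fin n, 2 * s ≤ (l : ℕ) →
      ⟪wedgeSV n g (φ l), wedgeSV n g (φ l)⟫_ℂ = ((3 : ℝ) : ℂ)⁻¹) := by
  intro g
  have hg : g = ∑ i : Fin s, ξ i • ((Real.sqrt 2 : ℂ) •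
      wedge2 n (φ ⟨2 * (i : ℕ), by have := i.isLt; omega⟩)
        (φ ⟨2 * (i : ℕ) + 1, by have := i.isLt; omega⟩)) := rfl
  have hef : ∀ i j : Fin s,
      (⟨2 * (i : ℕ), by have := i.isLt; omega⟩ : Fin n)
        ≠ (⟨2 * (j : ℕ) + 1, by have := j.isLt; omega⟩ : Fin n) := by
    intro i j h
    have := congrArg Fin.val h
    simp at this
    omega
  have he : Function.Injective
      (fun i : Fin s => (⟨2 * (i : ℕ), by have := i.isLt; omega⟩ : Fin n)) := by
    intro i j h
    have := congrArg Fin.val h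
    simp at this
    exact Fin.ext (by omega)
  have hf : Function.Injective
      (fun i : Fin s => (⟨2 * (i : ℕ) + 1, by have := i.isLt; omega⟩ : Fin n)) := by
    intro i j h
    have := congrArg Fin.val h
    simp at this
    exact Fin.ext (by omega)
  have hgdef : ∀ a b : Fin n, g ![a, b] = ∑ i : Fin s,
      (ξ i * (((Real.sqrt 2 : ℝ) : ℂ) * 2⁻¹)) *
        (φ (⟨2 * (i : ℕ), by have := i.isLt; omega⟩ : Fin n) a
            * φ (⟨2 * (i : ℕ) + 1, by have := i.isLt; omega⟩ : Fin n) b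
          - φ (⟨2 * (i : ℕ), by have := i.isLt; omega⟩ : Fin n) b
            * φ (⟨2 * (i : ℕ) + 1, by have := i.isLt; omega⟩ : Fin n) a) := by
    intro a b
    rw [hg]
    have h1 : (∑ i : Fin s, ξ i • ((Real.sqrt 2 : ℂ) •
        wedge2 n (φ ⟨2 * (i : ℕ), by have := i.isLt; omega⟩)
          (φ ⟨2 * (i : ℕ) + 1, by have := i.isLt; omega⟩))) ![a, b]
        = ∑ i : Fin s, (ξ i • ((Real.sqrt 2 : ℂ) •
        wedge2 n (φ ⟨2 * (i : ℕ), by have := i.isLt; omega⟩)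
          (φ ⟨2 * (i : ℕ) + 1, by have := i.isLt; omega⟩))) ![a, b] :=
      by rw [WithLp.ofLp_sum, Finset.sum_apply]
    rw [h1]
    refine Finset.sum_congr rfl fun i _ => ?_
    simp [PiLp.smul_apply, wedge2, smul_eq_mul]
    ring
  have hκκ : ∀ i : Fin s,
      conj (ξ i * (((Real.sqrt 2 : ℝ) : ℂ) * 2⁻¹)) * (ξ i * (((Real.sqrt 2 : ℝ) : ℂ) * 2⁻¹))
        = ((‖ξ i‖ ^ 2 : ℝ) : ℂ) * 2⁻¹ := by
    intro i
    have h2' : ((Real.sqrt 2 : ℝ) : ℂ) * ((Real.sqrt 2 : ℝ) : ℂ) = 2 := by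
      norm_cast
      rw [Real.mul_self_sqrt] <;> norm_num
    have hc : conj (ξ i * (((Real.sqrt 2 : ℝ) : ℂ) * 2⁻¹)) * (ξ i * (((Real.sqrt 2 : ℝ) : ℂ) * 2⁻¹))
        = (conj (ξ i) * ξ i) * ((((Real.sqrt 2 : ℝ) : ℂ) * ((Real.sqrt 2 : ℝ) : ℂ)) * (2⁻¹ * 2⁻¹)) := by
      simp only [map_mul, Complex.conj_ofReal, map_inv₀, Complex.conj_ofNat]
      ring
    have hcm : conj (ξ i) * ξ i = ((‖ξ i‖ ^ 2 : ℝ) : ℂ) := by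
      rw [RCLike.conj_mul]; norm_cast
    rw [hc, h2', hcm]
    ring
  have key : ∀ j : Fin n, ⟪wedgeSV n g (φ j), wedgeSV n g (φ j)⟫_ℂ
      = 3⁻¹ * ∑ i : Fin s, ((‖ξ i‖ ^ 2 : ℝ) : ℂ) * 2⁻¹ *
          (2 - 2 * ((if 2 * (i : ℕ) = (j : ℕ) then 1 else 0)
            + (if 2 * (i : ℕ) + 1 = (j : ℕ) then 1 else 0))) := by
    intro j
    rw [master n s φ hφ _ _ he hf hef _ g hgdef j]
    congr 1
    refine Finset.sum_congr rfl fun i _ => ?_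
    rw [hκκ i]
    simp [Fin.ext_iff]
  have hsum1 : ∑ i : Fin s, ((‖ξ i‖ ^ 2 : ℝ) : ℂ) = 1 := by
    rw [← Complex.ofReal_sum, hξ, Complex.ofReal_one]
  constructor
  · intro k
    have hone : ∀ (j : Fin n) (k : Fin s),
        (∀ i : Fin s, (2 * (i : ℕ) = (j : ℕ)) ↔ i = k) →
        (∀ i : Fin s, ¬(2 * (i : ℕ) + 1 = (j : ℕ))) →
        ⟪wedgeSV n g (φ j), wedgeSV n g (φ j)⟫_ℂ = (((1 - ‖ξ k‖ ^ 2) / 3 : ℝ) : ℂ) := by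
      intro j k h1 h2
      rw [key j]
      have hs : ∑ i : Fin s, ((‖ξ i‖ ^ 2 : ℝ) : ℂ) * 2⁻¹ *
          (2 - 2 * ((if 2 * (i : ℕ) = (j : ℕ) then 1 else 0)
            + (if 2 * (i : ℕ) + 1 = (j : ℕ) then 1 else 0)))
          = (∑ i : Fin s, ((‖ξ i‖ ^ 2 : ℝ) : ℂ))
            - ∑ i : Fin s, (if i = k then ((‖ξ i‖ ^ 2 : ℝ) : ℂ) else 0) := by
        rw [← Finset.sum_sub_distrib]
        refine Finset.sum_congr rfl fun i _ => ?_
        rw [if_neg (h2 i)]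
        by_cases h : i = k
        · rw [if_pos ((h1 i).mpr h), if_pos h]
          ring
        · rw [if_neg (fun hh => h ((h1 i).mp hh)), if_neg h]
          ring
      rw [hs, hsum1, Finset.sum_ite_eq' Finset.univ k
        (fun i => ((‖ξ i‖ ^ 2 : ℝ) : ℂ)), if_pos (Finset.mem_univ k)]
      push_cast
      ring
    have htwo : ∀ (j : Fin n) (k : Fin s),
        (∀ i : Fin s, ¬(2 * (i : ℕ) = (j : ℕ))) →
        (∀ i : Fin s, (2 * (i : ℕ) + 1 = (j : ℕ)) ↔ i = k) →
        ⟪wedgeSV n g (φ j), wedgeSV n g (φ j)⟫_ℂ = (((1 - ‖ξ k‖ ^ 2) / 3 : ℝ) : ℂ) := by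
      intro j k h1 h2
      rw [key j]
      have hs : ∑ i : Fin s, ((‖ξ i‖ ^ 2 : ℝ) : ℂ) * 2⁻¹ *
          (2 - 2 * ((if 2 * (i : ℕ) = (j : ℕ) then 1 else 0)
            + (if 2 * (i : ℕ) + 1 = (j : ℕ) then 1 else 0)))
          = (∑ i : Fin s, ((‖ξ i‖ ^ 2 : ℝ) : ℂ))
            - ∑ i : Fin s, (if i = k then ((‖ξ i‖ ^ 2 : ℝ) : ℂ) else 0) := by
        rw [← Finset.sum_sub_distrib]
        refine Finset.sum_congr rfl fun i _ => ?_
        rw [if_neg (h1 i)]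
        by_cases h : i = k
        · rw [if_pos ((h2 i).mpr h), if_pos h]
          ring
        · rw [if_neg (fun hh => h ((h2 i).mp hh)), if_neg h]
          ring
      rw [hs, hsum1, Finset.sum_ite_eq' Finset.univ k
        (fun i => ((‖ξ i‖ ^ 2 : ℝ) : ℂ)), if_pos (Finset.mem_univ k)]
      push_cast
      ring
    constructor
    · exact hone _ k (fun i => by simp; omega) (fun i => by simp; omega)
    · exact htwo _ k (fun i => by simp; omega) (fun i => by simp; omega)
  · intro l hl
    rw [key l]
    have hs : ∑ i : Fin s, ((‖ξ i‖ ^ 2 : ℝ) : ℂ) * 2⁻¹ *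
        (2 - 2 * ((if 2 * (i : ℕ) = (l : ℕ) then 1 else 0)
          + (if 2 * (i : ℕ) + 1 = (l : ℕ) then 1 else 0)))
        = ∑ i : Fin s, ((‖ξ i‖ ^ 2 : ℝ) : ℂ) := by
      refine Finset.sum_congr rfl fun i _ => ?_
      rw [if_neg (by have := i.isLt; omega), if_neg (by have := i.isLt; omega)]
      ring
    rw [hs, hsum1]
    push_cast
    norm_num

end
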